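/- (Transience criterion for locally regular monotone drifts) Let the chain be uniformly bounded with bound d, and suppose there exists N >= 1 such that for all i >= N: (i) gamma_i > 0; (ii) the sequence (gamma_i)_{i >= N} is non-increasing; (iii) sum_{k=0}^infinity gamma_k^2 < infinity; (iv) the local oscillation delta_i = max_{|k-i| <= d} |gamma_k^2 - gamma_i^2| satisfies d * delta_i <= (1/2) gamma_i^3. Then the chain is transient. -/

import Mathlib

/-!
The tail sums `f i = ∑_{m ≥ i} γ_m²` form a bounded Lyapunov function that strictly
decreases from `N` on. On the window `|k - i| ≤ d` it is linear with slope `-γ_i²` up to an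
error `d δ_i`, so its expected one-step change at `i` is at most `-γ_i³ + d δ_i ≤ 0`.
Hitting probabilities of `i₀` are dominated by any function that is `≥ 1` at `i₀` and
superharmonic elsewhere; applied to `min 1 (f / f B)` with `B ≥ max N i₀`, this bounds the
probability of reaching `i₀` from `B + 1` by `f (B + 1) / f B < 1`, whereas recurrence of `i₀`
together with irreducibility would make it `1`.
-/
open scoped ENNReal BigOperators
open Filter

/-- A discrete-time Markov chain on the nonnegative integers, given by its
row-stochastic transition matrix. -/
structure MarkovChain where
  p : ℕ → ℕ → ℝ≥0∞
  row_sum : ∀ i, ∑' j, p i j = 1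

namespace MarkovChain

/-- `n`-step transition probabilities. -/
noncomputable def step (M : MarkovChain) : ℕ → ℕ → ℕ → ℝ≥0∞
  | 0, i, j => if i = j then 1 else 0
  | (n+1), i, j => ∑' k, M.p i k * M.step n k j

/-- Irreducibility: every state reaches every other state with positive probability. -/
def Irreducible (M : MarkovChain) : Prop := ∀ i j, ∃ n, 0 < M.step n i j

/-- Probability, starting from `j`, that the chain reaches state `i` for the first
time at time `n` (time `0` counts iff `j = i`). -/
noncomputable def hitAt (M : MarkovChain) (i : ℕ) : ℕ → ℕ → ℝ≥0∞
  | 0, j => if j = i then 1 else 0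
  | (n+1), j => if j = i then 0 else ∑' k, M.p j k * M.hitAt i n k

/-- Probability that the first return to `i` occurs at time `n + 1`. -/
noncomputable def firstReturn (M : MarkovChain) (i n : ℕ) : ℝ≥0∞ :=
  ∑' k, M.p i k * M.hitAt i n k

/-- The chain is recurrent: return to each state is almost sure. -/
def Recurrent (M : MarkovChain) : Prop := ∀ i, ∑' n, M.firstReturn i n = 1

/-- The chain is positive recurrent: recurrent with finite expected return times. -/
def PositiveRecurrent (M : MarkovChain) : Prop :=
  M.Recurrent ∧ ∀ i, ∑' n : ℕ, ((n : ℝ≥0∞) + 1) * M.firstReturn i n < ⊤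

/-- Null recurrent: recurrent but not positive recurrent. -/
def NullRecurrent (M : MarkovChain) : Prop := M.Recurrent ∧ ¬ M.PositiveRecurrent

/-- The chain is transient: return to each state happens with probability `< 1`. -/
def Transient (M : MarkovChain) : Prop := ∀ i, ∑' n, M.firstReturn i n < 1

/-- Mean drift at state `i`. -/
noncomputable def drift (M : MarkovChain) (i : ℕ) : ℝ :=
  ∑' j, (M.p i j).toReal * ((j : ℝ) - i)

/-- The mean drift at `i` is finite (well-defined). -/
def DriftFinite (M : MarkovChain) (i : ℕ) : Prop :=
  Summable fun j => (M.p i j).toReal * ((j : ℝ) - i)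

/-- Second-moment drift at state `i`. -/
noncomputable def secondMoment (M : MarkovChain) (i : ℕ) : ℝ :=
  ∑' j, (M.p i j).toReal * ((j : ℝ) - i) ^ 2

/-- Downward uniformly bounded with bound `k`: no downward jumps longer than `k`. -/
def DownwardBounded (M : MarkovChain) (k : ℕ) : Prop :=
  ∀ i j, j + k < i → M.p i j = 0

/-- Uniformly bounded with bound `d`: no jumps longer than `d`. -/
def UniformlyBounded (M : MarkovChain) (d : ℕ) : Prop :=
  ∀ i j : ℕ, (d : ℤ) < |(i : ℤ) - j| → M.p i j = 0

end MarkovChain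

open Finset

noncomputable def tailSq (γ : ℕ → ℝ) (i : ℕ) : ℝ := ∑' m, γ (m + i) ^ 2

section tailSq

variable {γ : ℕ → ℝ}

lemma tailSq_eq_tsum_sub_sum_range (hs : Summable fun k => γ k ^ 2) (i : ℕ) :
    tailSq γ i = ∑' k, γ k ^ 2 - ∑ k ∈ range i, γ k ^ 2 :=
  eq_sub_of_add_eq' (hs.sum_add_tsum_nat_add i)

lemma tailSq_sub_tailSq (hs : Summable fun k => γ k ^ 2) {i k : ℕ} (hik : i ≤ k) :
    tailSq γ i - tailSq γ k = ∑ m ∈ Ico i k, γ m ^ 2 := by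
  rw [tailSq_eq_tsum_sub_sum_range hs, tailSq_eq_tsum_sub_sum_range hs, sum_Ico_eq_sub _ hik]
  ring

lemma tailSq_nonneg (i : ℕ) : 0 ≤ tailSq γ i := tsum_nonneg fun _ => sq_nonneg _

lemma tailSq_antitone (hs : Summable fun k => γ k ^ 2) : Antitone (tailSq γ) := fun _ _ hik =>
  sub_nonneg.mp <| (tailSq_sub_tailSq hs hik).symm ▸ sum_nonneg fun _ _ => sq_nonneg _

lemma tailSq_succ_lt (hs : Summable fun k => γ k ^ 2) {i : ℕ} (hi : γ i ≠ 0) :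
    tailSq γ (i + 1) < tailSq γ i := by
  have := tailSq_sub_tailSq hs (Nat.le_succ i)
  rw [Nat.Ico_succ_singleton, sum_singleton] at this
  linarith [pow_pos (abs_pos.mpr hi) 2, sq_abs (γ i)]

lemma tailSq_sub_le (hs : Summable fun k => γ k ^ 2) {d i k : ℕ} {δ : ℝ}
    (hk : k ∈ Icc (i - d) (i + d))
    (hδ : ∀ m ∈ Icc (i - d) (i + d), |γ m ^ 2 - γ i ^ 2| ≤ δ) :
    tailSq γ k - tailSq γ i ≤ d * δ - (k - i) * γ i ^ 2 := by
  have hδ0 : 0 ≤ δ := (abs_nonneg _).trans (hδ i (by simp))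
  rw [mem_Icc] at hk
  rcases le_total i k with hik | hki
  · have hsum : ∑ m ∈ Ico i k, (γ i ^ 2 - γ m ^ 2) ≤ #(Ico i k) • δ :=
      sum_le_card_nsmul _ _ _ fun m hm => ((le_abs_self _).trans_eq (abs_sub_comm _ _)).trans
        (hδ m (by simp only [mem_Ico, mem_Icc] at hm ⊢; omega))
    rw [sum_sub_distrib, sum_const, Nat.card_Ico, nsmul_eq_mul, nsmul_eq_mul,
      ← tailSq_sub_tailSq hs hik, Nat.cast_sub hik] at hsum
    have hkd : (k : ℝ) - i ≤ d := by
      rw [sub_le_iff_le_add']; exact_mod_cast hk.2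
    nlinarith
  · have hsum : ∑ m ∈ Ico k i, (γ m ^ 2 - γ i ^ 2) ≤ #(Ico k i) • δ :=
      sum_le_card_nsmul _ _ _ fun m hm => (le_abs_self _).trans
        (hδ m (by simp only [mem_Ico, mem_Icc] at hm ⊢; omega))
    rw [sum_sub_distrib, sum_const, Nat.card_Ico, nsmul_eq_mul, nsmul_eq_mul,
      ← tailSq_sub_tailSq hs hki, Nat.cast_sub hki] at hsum
    have hkd : (i : ℝ) - k ≤ d := by
      rw [sub_le_iff_le_add']; exact_mod_cast (by omega : i ≤ k + d)
    nlinarith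

end tailSq

namespace MarkovChain

variable (M : MarkovChain)

lemma p_le_one (i j : ℕ) : M.p i j ≤ 1 := (ENNReal.le_tsum j).trans (M.row_sum i).le

lemma p_ne_top (i j : ℕ) : M.p i j ≠ ⊤ :=
  ne_top_of_le_ne_top ENNReal.one_ne_top (M.p_le_one i j)

lemma tsum_p_mul_le_one (i : ℕ) {h : ℕ → ℝ≥0∞} (hh : ∀ k, h k ≤ 1) :
    ∑' k, M.p i k * h k ≤ 1 :=
  calc ∑' k, M.p i k * h k
      ≤ ∑' k, M.p i k := ENNReal.tsum_le_tsum fun k => mul_le_of_le_one_right' (hh k)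
    _ = 1 := M.row_sum i

lemma eq_one_of_tsum_p_mul_eq_one {i k : ℕ} {h : ℕ → ℝ≥0∞} (hh : ∀ k, h k ≤ 1)
    (hsum : ∑' k, M.p i k * h k = 1) (hik : M.p i k ≠ 0) : h k = 1 := by
  by_contra hk
  have hlt : ∑' k, M.p i k * h k < ∑' k, M.p i k :=
    ENNReal.tsum_lt_tsum (hsum ▸ ENNReal.one_ne_top) (fun k => mul_le_of_le_one_right' (hh k))
      (i := k) <| by
        simpa using ENNReal.mul_lt_mul_right hik (M.p_ne_top i k) ((hh k).lt_of_ne hk)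
  rw [hsum, M.row_sum] at hlt
  exact hlt.false

noncomputable def hitProbBefore (i₀ n j : ℕ) : ℝ≥0∞ := ∑ m ∈ range n, M.hitAt i₀ m j

noncomputable def hitProb (i₀ j : ℕ) : ℝ≥0∞ := ∑' n, M.hitAt i₀ n j

lemma hitProbBefore_succ_self (i₀ n : ℕ) : M.hitProbBefore i₀ (n + 1) i₀ = 1 := by
  simp [hitProbBefore, sum_range_succ', hitAt]

lemma hitProbBefore_succ_of_ne {i₀ j : ℕ} (n : ℕ) (hj : j ≠ i₀) :
    M.hitProbBefore i₀ (n + 1) j = ∑' k, M.p j k * M.hitProbBefore i₀ n k := by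
  simp only [hitProbBefore, sum_range_succ', hitAt, if_neg hj, add_zero, mul_sum]
  exact (Summable.tsum_finsetSum fun _ _ => ENNReal.summable).symm

lemma hitProb_self (i₀ : ℕ) : M.hitProb i₀ i₀ = 1 := by
  rw [hitProb, tsum_eq_single 0 fun n hn => ?_]
  · simp [hitAt]
  · obtain ⟨m, rfl⟩ := Nat.exists_eq_succ_of_ne_zero hn
    simp [hitAt]

lemma hitProb_of_ne {i₀ j : ℕ} (hj : j ≠ i₀) :
    M.hitProb i₀ j = ∑' k, M.p j k * M.hitProb i₀ k := by
  rw [hitProb, tsum_eq_zero_add' ENNReal.summable]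
  simp only [hitAt, if_neg hj, zero_add, hitProb, ← ENNReal.tsum_mul_left]
  exact ENNReal.tsum_comm

lemma hitProb_le_of_superharmonic {i₀ : ℕ} {h : ℕ → ℝ≥0∞} (h_one : 1 ≤ h i₀)
    (h_super : ∀ j, j ≠ i₀ → ∑' k, M.p j k * h k ≤ h j) (j : ℕ) :
    M.hitProb i₀ j ≤ h j := by
  suffices ∀ n j, M.hitProbBefore i₀ n j ≤ h j from
    Summable.tsum_le_of_sum_range_le ENNReal.summable fun n => this n j
  intro n
  induction n with
  | zero => simp [hitProbBefore]
  | succ n ih =>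
    intro j
    by_cases hj : j = i₀
    · rw [hj, hitProbBefore_succ_self]; exact h_one
    · rw [M.hitProbBefore_succ_of_ne n hj]
      exact (ENNReal.tsum_le_tsum fun k => mul_le_mul_right (ih k) _).trans (h_super j hj)

lemma hitProb_le_one (i₀ j : ℕ) : M.hitProb i₀ j ≤ 1 :=
  M.hitProb_le_of_superharmonic le_rfl (fun j _ => M.tsum_p_mul_le_one j fun _ => le_rfl) j

lemma tsum_firstReturn_eq (i₀ : ℕ) :
    ∑' n, M.firstReturn i₀ n = ∑' k, M.p i₀ k * M.hitProb i₀ k := by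
  simp only [firstReturn, hitProb, ← ENNReal.tsum_mul_left]
  exact ENNReal.tsum_comm

lemma hitProb_eq_one_of_step_pos {i₀ : ℕ} (hrec : ∑' n, M.firstReturn i₀ n = 1) (n : ℕ) :
    ∀ {j k}, M.hitProb i₀ j = 1 → 0 < M.step n j k → M.hitProb i₀ k = 1 := by
  induction n with
  | zero =>
    intro j k hj hjk
    obtain rfl : j = k := by by_contra hne; simp [step, hne] at hjk
    exact hj
  | succ n ih =>
    intro j k hj hjk
    obtain ⟨m, hm⟩ : ∃ m, M.p j m * M.step n m k ≠ 0 := by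
      by_contra! h
      simp [step, h] at hjk
    refine ih ?_ (pos_iff_ne_zero.mpr (right_ne_zero_of_mul hm))
    refine M.eq_one_of_tsum_p_mul_eq_one (M.hitProb_le_one i₀) ?_ (left_ne_zero_of_mul hm)
    by_cases hji : j = i₀
    · rwa [hji, ← tsum_firstReturn_eq]
    · rw [← M.hitProb_of_ne hji, hj]

lemma hitProb_le_div {i₀ B : ℕ} (hB : i₀ ≤ B) {G : ℕ → ℝ≥0∞} (hG : Antitone G)
    (hGB : G B ≠ 0) (hGB' : G B ≠ ⊤) (hsuper : ∀ j, B < j → ∑' k, M.p j k * G k ≤ G j)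
    (j : ℕ) : M.hitProb i₀ j ≤ G j / G B := by
  have one_le_div {j} (hj : j ≤ B) : 1 ≤ G j / G B := by
    rw [ENNReal.le_div_iff_mul_le (.inl hGB) (.inl hGB'), one_mul]
    exact hG hj
  refine (M.hitProb_le_of_superharmonic (h := fun k => min 1 (G k / G B))
    (le_min le_rfl (one_le_div hB)) (fun j _ => le_min ?_ ?_) j).trans (min_le_right _ _)
  · exact M.tsum_p_mul_le_one j fun _ => min_le_left _ _
  · rcases le_or_gt j B with hj | hj
    · exact (M.tsum_p_mul_le_one j fun _ => min_le_left _ _).trans (one_le_div hj)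
    · calc ∑' k, M.p j k * min 1 (G k / G B)
          ≤ ∑' k, M.p j k * G k / G B := ENNReal.tsum_le_tsum fun k => by
            rw [mul_div_assoc]; gcongr; exact min_le_right _ _
        _ = (∑' k, M.p j k * G k) / G B := by
            simp only [div_eq_mul_inv]; exact ENNReal.tsum_mul_right
        _ ≤ G j / G B := ENNReal.div_le_div_right (hsuper j hj) _

theorem transient_of_antitone_superharmonic (hirr : M.Irreducible) {N : ℕ}
    {G : ℕ → ℝ≥0∞} (hG : Antitone G) (hGN : G N ≠ ⊤)
    (hsuper : ∀ j, N ≤ j → ∑' k, M.p j k * G k ≤ G j)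
    (hstrict : ∀ j, N ≤ j → G (j + 1) < G j) : M.Transient := by
  intro i₀
  set B := max N i₀
  have hGB : G B ≠ 0 := (hstrict B (le_max_left _ _)).ne_bot
  have hGB' : G B ≠ ⊤ := ne_top_of_le_ne_top hGN (hG (le_max_left _ _))
  have hesc : M.hitProb i₀ (B + 1) < 1 := by
    refine (M.hitProb_le_div (le_max_right _ _) hG hGB hGB'
      (fun j hj => hsuper j ((le_max_left _ _).trans hj.le)) _).trans_lt ?_
    rw [ENNReal.div_lt_iff (.inl hGB) (.inl hGB'), one_mul]
    exact hstrict B (le_max_left _ _)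
  refine ((M.tsum_firstReturn_eq i₀).trans_le
    (M.tsum_p_mul_le_one i₀ (M.hitProb_le_one i₀))).lt_of_ne fun hrec => ?_
  obtain ⟨n, hn⟩ := hirr i₀ (B + 1)
  exact hesc.ne (M.hitProb_eq_one_of_step_pos hrec n (M.hitProb_self i₀) hn)

end MarkovChain

namespace MarkovChain.UniformlyBounded

variable {M : MarkovChain} {d : ℕ}

lemma p_eq_zero (hub : M.UniformlyBounded d) {i j : ℕ} (hj : j ∉ Icc (i - d) (i + d)) :
    M.p i j = 0 :=
  hub i j (by rw [mem_Icc] at hj; rw [lt_abs]; omega)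

lemma tsum_p_mul_ofReal (hub : M.UniformlyBounded d) (i : ℕ) {f : ℕ → ℝ}
    (hf : ∀ k, 0 ≤ f k) :
    ∑' k, M.p i k * ENNReal.ofReal (f k)
      = ENNReal.ofReal (∑ k ∈ Icc (i - d) (i + d), (M.p i k).toReal * f k) := by
  rw [tsum_eq_sum fun k hk => by rw [hub.p_eq_zero hk, zero_mul],
    ENNReal.ofReal_sum_of_nonneg fun k _ => mul_nonneg ENNReal.toReal_nonneg (hf k)]
  refine sum_congr rfl fun k _ => ?_
  rw [ENNReal.ofReal_mul ENNReal.toReal_nonneg, ENNReal.ofReal_toReal (M.p_ne_top i k)]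

lemma sum_toReal_p (hub : M.UniformlyBounded d) (i : ℕ) :
    ∑ k ∈ Icc (i - d) (i + d), (M.p i k).toReal = 1 := by
  have h : ∑ k ∈ Icc (i - d) (i + d), M.p i k = 1 := by
    rw [← M.row_sum i, tsum_eq_sum fun k hk => hub.p_eq_zero hk]
  rw [← ENNReal.toReal_sum fun k _ => M.p_ne_top i k, h, ENNReal.toReal_one]

lemma drift_eq_sum (hub : M.UniformlyBounded d) (i : ℕ) :
    M.drift i = ∑ k ∈ Icc (i - d) (i + d), (M.p i k).toReal * ((k : ℝ) - i) :=
  tsum_eq_sum fun k hk => by rw [hub.p_eq_zero hk, ENNReal.toReal_zero, zero_mul]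

lemma sum_p_mul_tailSq_drift_le (hub : M.UniformlyBounded d)
    (h_sq : Summable fun k => M.drift k ^ 2) {i : ℕ} {δ : ℝ}
    (hδ : ∀ k ∈ Icc (i - d) (i + d), |M.drift k ^ 2 - M.drift i ^ 2| ≤ δ)
    (hosc : d * δ ≤ 1 / 2 * M.drift i ^ 3) :
    ∑ k ∈ Icc (i - d) (i + d), (M.p i k).toReal * tailSq M.drift k ≤ tailSq M.drift i := by
  set γ := M.drift
  set q : ℕ → ℝ := fun k => (M.p i k).toReal
  have hδ0 : 0 ≤ δ := (abs_nonneg _).trans (hδ i (by simp))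
  have hcmp : ∑ k ∈ Icc (i - d) (i + d), q k * (tailSq γ k - tailSq γ i)
      ≤ ∑ k ∈ Icc (i - d) (i + d), q k * (d * δ - (k - i) * γ i ^ 2) :=
    sum_le_sum fun k hk =>
      mul_le_mul_of_nonneg_left (tailSq_sub_le h_sq hk hδ) ENNReal.toReal_nonneg
  have hlhs : ∑ k ∈ Icc (i - d) (i + d), q k * (tailSq γ k - tailSq γ i)
      = ∑ k ∈ Icc (i - d) (i + d), q k * tailSq γ k
        - (∑ k ∈ Icc (i - d) (i + d), q k) * tailSq γ i := by
    rw [sum_mul, ← sum_sub_distrib]; exact sum_congr rfl fun _ _ => by ring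
  have hrhs : ∑ k ∈ Icc (i - d) (i + d), q k * (d * δ - (k - i) * γ i ^ 2)
      = (∑ k ∈ Icc (i - d) (i + d), q k) * (d * δ)
        - (∑ k ∈ Icc (i - d) (i + d), q k * ((k : ℝ) - i)) * γ i ^ 2 := by
    rw [sum_mul, sum_mul, ← sum_sub_distrib]; exact sum_congr rfl fun _ _ => by ring
  rw [hlhs, hrhs, hub.sum_toReal_p, ← hub.drift_eq_sum] at hcmp
  -- `hosc` and `0 ≤ δ` give `γ i ^ 3 ≥ 2 d δ ≥ 0`, so `d δ - γ i ^ 3 ≤ 0`.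
  nlinarith

end MarkovChain.UniformlyBounded

/-- transience criterion for locally regular monotone drifts. -/
theorem stmt8 (M : MarkovChain) (hirr : M.Irreducible) (d : ℕ)
    (hub : M.UniformlyBounded d)
    (N : ℕ)
    (h_pos : ∀ i, N ≤ i → 0 < M.drift i)
    (h_sq : Summable fun k => (M.drift k) ^ 2)
    (h_osc : ∀ i, N ≤ i →
      (d : ℝ) * ((Finset.Icc (i - d) (i + d)).sup'
          (Finset.nonempty_Icc.mpr (by omega))
          fun k => |M.drift k ^ 2 - M.drift i ^ 2|)
        ≤ (1 / 2) * M.drift i ^ 3) :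
    M.Transient := by
  set G : ℕ → ℝ≥0∞ := fun k => ENNReal.ofReal (tailSq M.drift k)
  have h_super (i : ℕ) (hi : N ≤ i) : ∑' k, M.p i k * G k ≤ G i := by
    rw [hub.tsum_p_mul_ofReal i tailSq_nonneg]
    exact ENNReal.ofReal_le_ofReal <| hub.sum_p_mul_tailSq_drift_le h_sq
      (fun k hk => le_sup' (fun k => |M.drift k ^ 2 - M.drift i ^ 2|) hk) (h_osc i hi)
  refine M.transient_of_antitone_superharmonic hirr
    (fun i j hij => ENNReal.ofReal_le_ofReal (tailSq_antitone h_sq hij)) ENNReal.ofReal_ne_top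
    h_super fun i hi => ?_
  exact (ENNReal.ofReal_lt_ofReal_iff_of_nonneg (tailSq_nonneg _)).mpr
    (tailSq_succ_lt h_sq (h_pos i hi).ne')
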